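/- Let X be a tree and g₁, g₂ hyperbolic automorphisms of X whose axes A_{g₁}, A_{g₂} are disjoint or meet in at most one vertex (i.e., share no edge). If the subgroup ⟨g₁, g₂⟩ acts without edge inversions, then ⟨g₁, g₂⟩ is a free group of rank 2. -/

import Mathlib

/-!
A vertex `v` of minimal displacement for a hyperbolic automorphism `g` of a tree lies on the
geodesic from `g⁻¹ v` to `g v` (for displacement one, because `g` inverts no edge), and so does
every vertex of that geodesic. Let `p₁, p₂` be a closest pair of vertices of minimal displacement
for `g₁, g₂`, and `aᵢ` the neighbour of `pᵢ` towards `gᵢ⁻¹ pᵢ`. The half-tree `Yᵢ` behind the edge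
`pᵢ aᵢ` and its translate `Xᵢ = gᵢ (Yᵢᶜ)`, the half-tree beyond `gᵢ aᵢ, gᵢ pᵢ`, both point away
from `pᵢ` along the axis of `gᵢ`. Prolonging the bridge `[p₁, p₂]` along the axes shows that the
four half-trees are pairwise disjoint; when `p₁ = p₂` this needs the two axes to leave `p₁` along
different edges, which is the hypothesis that they share no edge. The ping-pong lemma finishes.
-/

open Function
open scoped Pointwise

universe u

namespace SimpleGraph

variable {V V' : Type*} {G : SimpleGraph V} {G' : SimpleGraph V'}

def Between (G : SimpleGraph V) (x u y : V) : Prop :=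
  G.dist x u + G.dist u y = G.dist x y

section Between

variable {w x y z : V}

theorem Between.symm (h : G.Between x y z) : G.Between z y x := by
  unfold Between at *
  rw [G.dist_comm (u := z), G.dist_comm (u := y) (v := x), G.dist_comm (u := z)]
  omega

theorem between_self_left (x y : V) : G.Between x x y := by
  simp [Between]

theorem between_self_right (x y : V) : G.Between x y y := by
  simp [Between]

variable (hG : G.Connected)
include hG

theorem Between.trans_left (h₁ : G.Between w y z) (h₂ : G.Between w x y) : G.Between w x z := by
  unfold Between at *
  have := hG.dist_triangle (u := w) (v := x) (w := z)
  have := hG.dist_triangle (u := x) (v := y) (w := z)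
  omega

theorem Between.trans_right (h₁ : G.Between w x z) (h₂ : G.Between x y z) : G.Between w y z :=
  (h₁.symm.trans_left hG h₂.symm).symm

theorem Between.trans_left_right (h₁ : G.Between w y z) (h₂ : G.Between w x y) :
    G.Between x y z := by
  unfold Between at *
  have := hG.dist_triangle (u := w) (v := x) (w := z)
  have := hG.dist_triangle (u := x) (v := y) (w := z)
  omega

theorem Between.trans_right_left (h₁ : G.Between w x z) (h₂ : G.Between x y z) :
    G.Between w x y :=
  (h₁.symm.trans_left_right hG h₂.symm).symm

theorem exists_adj_between (hxy : x ≠ y) : ∃ a, G.Adj x a ∧ G.Between x a y := by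
  obtain ⟨p, -, hp⟩ := hG.exists_path_of_dist x y
  cases p with
  | nil => exact absurd rfl hxy
  | @cons _ a _ hxa q =>
    refine ⟨a, hxa, ?_⟩
    have := dist_le q
    have := hG.dist_triangle (u := x) (v := a) (w := y)
    have := dist_eq_one_iff_adj.2 hxa
    rw [Walk.length_cons] at hp
    unfold Between
    omega

end Between

theorem Hom.dist_le (f : G →g G') {u v : V} (h : G.Reachable u v) :
    G'.dist (f u) (f v) ≤ G.dist u v := by
  obtain ⟨p, hp⟩ := h.exists_walk_length_eq_dist
  simpa [hp] using SimpleGraph.dist_le (p.map f)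

theorem Iso.dist_apply (φ : G ≃g G') (u v : V) : G'.dist (φ u) (φ v) = G.dist u v := by
  by_cases h : G.Reachable u v
  · refine le_antisymm (Hom.dist_le φ.toHom h) ?_
    simpa using Hom.dist_le φ.symm.toHom (u := φ u) (v := φ v) (Iso.reachable_iff.2 h)
  · rw [dist_eq_zero_of_not_reachable h,
      dist_eq_zero_of_not_reachable (mt Iso.reachable_iff.1 h)]

theorem Between.map {x u y : V} (h : G.Between x u y) (φ : G ≃g G') :
    G'.Between (φ x) (φ u) (φ y) := by
  simpa only [Between, Iso.dist_apply] using h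

namespace IsTree

variable (hT : G.IsTree) {p q r s s' v v' x e : V}
include hT

theorem eq_of_adj_of_dist_lt (hr : G.Adj p r) (hs : G.Adj p s) (hxr : G.dist x r < G.dist x p)
    (hxs : G.dist x s < G.dist x p) : r = s := by
  obtain ⟨P, -, hP⟩ := hT.connected.exists_path_of_dist x r
  obtain ⟨Q, -, hQ⟩ := hT.connected.exists_path_of_dist x s
  have := hT.dist_eq_dist_add_one_of_adj x hr
  have := hT.dist_eq_dist_add_one_of_adj x hs
  have hP' := (P.concat hr.symm).isPath_of_length_eq_dist (by rw [Walk.length_concat]; omega)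
  have hQ' := (Q.concat hs.symm).isPath_of_length_eq_dist (by rw [Walk.length_concat]; omega)
  exact (Walk.concat_inj ((hT.existsUnique_path x p).unique hP' hQ')).1

theorem between_of_dist_le_of_adj (hps : G.Adj p s) (hle : G.dist q p ≤ G.dist q s) :
    G.Between q p s := by
  have := hT.dist_eq_dist_add_one_of_adj q hps
  have := dist_eq_one_iff_adj.2 hps
  unfold Between
  omega

theorem between_of_adj_of_adj (hs : G.Adj p s) (hs' : G.Adj p s') (hne : s ≠ s') :
    G.Between s p s' := by
  refine hT.between_of_dist_le_of_adj hs' (not_lt.1 fun h => hne ?_)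
  exact hT.eq_of_adj_of_dist_lt hs hs'
    (by simp [dist_eq_one_iff_adj.2 hs.symm]) h

theorem between_trans_of_ne (h₁ : G.Between x q p) (h₂ : G.Between q p e) (hqp : q ≠ p) :
    G.Between x q e := by
  have hG := hT.connected
  -- Walk from `p` to `e`: since `p` has only one neighbour closer to `x`, each step moves away.
  induction hn : G.dist p e generalizing q p with
  | zero => rwa [← hG.dist_eq_zero_iff.1 hn]
  | succ n ih =>
    obtain ⟨s, hps, hpse⟩ := exists_adj_between hG (x := p) (y := e) (by rintro rfl; simp at hn)
    obtain ⟨r, hpr, hprq⟩ := exists_adj_between hG hqp.symm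
    have hrs : r ≠ s := by
      rintro rfl
      have := hG.dist_triangle (u := q) (v := r) (w := e)
      have := dist_eq_one_iff_adj.2 hpr
      have := G.dist_comm (u := q) (v := r)
      have := G.dist_comm (u := q) (v := p)
      unfold Between at *
      omega
    have hxrp : G.Between x r p := h₁.trans_right hG hprq.symm
    have hxps : G.Between x p s := by
      refine hT.between_of_dist_le_of_adj hps (not_lt.1 fun h => hrs ?_)
      have := dist_eq_one_iff_adj.2 hpr.symm
      exact hT.eq_of_adj_of_dist_lt hpr hps (by unfold Between at hxrp; omega) h
    have hse : G.dist s e = n := by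
      have := dist_eq_one_iff_adj.2 hps
      unfold Between at hpse
      omega
    exact (ih hxps hpse hps.ne hse).trans_left hG h₁

theorem between_of_bridge (hs : G.Adj p s) (hsv : G.Between p s v) (hs' : G.Adj q s')
    (hsv' : G.Between q s' v') (hle : G.dist p q ≤ G.dist s q)
    (hle' : G.dist p q ≤ G.dist p s') (hne : p = q → s ≠ s') :
    G.Between v p v' ∧ G.Between p q v' := by
  have hqps : G.Between q p s :=
    hT.between_of_dist_le_of_adj hs (by rwa [G.dist_comm, G.dist_comm (u := q)])
  have hqpv : G.Between q p v := hT.between_trans_of_ne hqps hsv hs.ne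
  have hpqv' : G.Between p q v' :=
    hT.between_trans_of_ne (hT.between_of_dist_le_of_adj hs' hle') hsv' hs'.ne
  refine ⟨?_, hpqv'⟩
  rcases eq_or_ne p q with rfl | hpq
  · have hsps' := hT.between_of_adj_of_adj hs hs' (hne rfl)
    have hvps' := (hT.between_trans_of_ne hsv.symm hsps' hs.ne.symm).trans_right hT.connected hsps'
    exact hT.between_trans_of_ne hvps' hsv' hs'.ne
  · exact hT.between_trans_of_ne hqpv.symm hpqv' hpq

end IsTree

def halfTree (G : SimpleGraph V) (u v : V) : Set V :=
  {x | G.dist x v < G.dist x u}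

theorem Adj.right_mem_halfTree {u v : V} (h : G.Adj u v) : v ∈ G.halfTree u v := by
  simp [halfTree, dist_eq_one_iff_adj.2 h.symm]

theorem Adj.between_of_mem_halfTree {u v x : V} (h : G.Adj u v) (hx : x ∈ G.halfTree u v) :
    G.Between x v u := by
  have := h.diff_dist_adj (u := x)
  have := dist_eq_one_iff_adj.2 h.symm
  simp only [halfTree, Set.mem_ofPred_eq] at hx
  unfold Between
  omega

theorem IsTree.compl_halfTree (hT : G.IsTree) {u v : V} (h : G.Adj u v) :
    (G.halfTree u v)ᶜ = G.halfTree v u := by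
  ext x
  have := hT.dist_ne_of_adj x h
  simp only [halfTree, Set.mem_compl_iff, Set.mem_ofPred_eq]
  omega

theorem Iso.image_halfTree (φ : G ≃g G') (u v : V) :
    φ '' G.halfTree u v = G'.halfTree (φ u) (φ v) := by
  ext y
  constructor
  · rintro ⟨x, hx, rfl⟩
    simpa only [halfTree, Set.mem_ofPred_eq, Iso.dist_apply] using hx
  · intro hy
    refine ⟨φ.symm y, ?_, by simp⟩
    simpa only [halfTree, Set.mem_ofPred_eq, ← φ.dist_apply (φ.symm y), RelIso.apply_symm_apply]
      using hy

theorem IsTree.image_compl_halfTree (hT : G.IsTree) (φ : G ≃g G') {u v : V} (h : G.Adj u v) :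
    φ '' (G.halfTree u v)ᶜ = G'.halfTree (φ v) (φ u) := by
  rw [hT.compl_halfTree h, φ.image_halfTree]

theorem IsTree.symm_image_compl_halfTree (hT : G'.IsTree) (φ : G ≃g G') {u v : V}
    (h : G.Adj u v) : φ.symm '' (G'.halfTree (φ u) (φ v))ᶜ = G.halfTree v u := by
  simpa only [RelIso.symm_apply_apply] using hT.image_compl_halfTree φ.symm (φ.map_adj_iff.2 h)

theorem IsTree.disjoint_halfTree (hT : G.IsTree) {u v u' v' : V} (huv : G.Adj u v)
    (h₁ : G.Between v u v') (h₂ : G.Between u u' v') :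
    Disjoint (G.halfTree u v) (G.halfTree u' v') := by
  rw [Set.disjoint_left]
  intro x hx hx'
  have hxv := hT.between_trans_of_ne (huv.between_of_mem_halfTree hx) h₁ huv.ne.symm
  have hxu' := (hxv.trans_right hT.connected h₁).trans_right hT.connected h₂
  simp only [halfTree, Set.mem_ofPred_eq] at hx'
  unfold Between at hxu'
  omega

/-- Requiring the first step `s` from `p` towards `v` to lie in `S` is what lets a shortest bridge
from `S` to another set be prolonged to `v`. -/
def IsOutwardEdge (G : SimpleGraph V) (S : Set V) (p u v : V) : Prop :=
  G.Adj u v ∧ G.Between p u v ∧ ∃ s ∈ S, G.Adj p s ∧ G.Between p s v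

theorem exists_mem_mem_forall_dist_le {S T : Set V} (hSne : S.Nonempty) (hTne : T.Nonempty) :
    ∃ p ∈ S, ∃ q ∈ T, ∀ x ∈ S, ∀ y ∈ T, G.dist p q ≤ G.dist x y := by
  obtain ⟨x, hx⟩ := hSne
  obtain ⟨y, hy⟩ := hTne
  have hST : (S ×ˢ T).Nonempty := ⟨(x, y), hx, hy⟩
  obtain ⟨hp, hq⟩ := argminOn_mem (fun z : V × V => G.dist z.1 z.2) _ hST
  exact ⟨_, hp, _, hq, fun a ha b hb => argminOn_le (fun z : V × V => G.dist z.1 z.2) _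
    (Set.mk_mem_prod ha hb)⟩

theorem IsTree.disjoint_halfTree_of_isOutwardEdge (hT : G.IsTree) {S T : Set V} {p q : V}
    (hp : p ∈ S) (hq : q ∈ T) (hpq : ∀ x ∈ S, ∀ y ∈ T, G.dist p q ≤ G.dist x y)
    (hST : ∀ x y, G.Adj x y → x ∈ S → y ∈ S → x ∈ T → y ∈ T → False) ⦃u v u' v' : V⦄
    (h : G.IsOutwardEdge S p u v) (h' : G.IsOutwardEdge T q u' v') :
    Disjoint (G.halfTree u v) (G.halfTree u' v') := by
  have hG := hT.connected
  obtain ⟨huv, hpuv, s, hsS, hps, hpsv⟩ := h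
  obtain ⟨-, hqu'v', s', hs'T, hqs', hqs'v'⟩ := h'
  obtain ⟨hvpv', hpqv'⟩ := hT.between_of_bridge hps hpsv hqs' hqs'v' (hpq s hsS q hq)
    (hpq p hp s' hs'T) (fun hpq hss' => hST p s hps hp hsS (hpq ▸ hq) (hss' ▸ hs'T))
  refine hT.disjoint_halfTree huv (hvpv'.trans_left hG hpuv.symm) ?_
  exact (hvpv'.trans_left_right hG hpuv.symm).trans_right hG (hpqv'.trans_right hG hqu'v')

namespace Iso

variable (φ : G ≃g G)

def minSet : Set V :=
  {v | ∀ w, G.dist v (φ v) ≤ G.dist w (φ w)}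

theorem minSet_nonempty [Nonempty V] : φ.minSet.Nonempty :=
  ⟨argmin fun v => G.dist v (φ v), fun w => argmin_le (fun v => G.dist v (φ v)) w⟩

variable {φ} {v w : V}

theorem dist_eq_sInf_of_mem_minSet (hv : v ∈ φ.minSet) :
    G.dist v (φ v) = sInf (Set.range fun w => G.dist w (φ w)) :=
  le_antisymm (le_csInf ⟨_, v, rfl⟩ (by rintro _ ⟨w, rfl⟩; exact hv w))
    (Nat.sInf_le ⟨v, rfl⟩)

theorem symm_apply_mem_minSet (hv : v ∈ φ.minSet) : φ.symm v ∈ φ.minSet := by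
  intro w
  simpa [← φ.dist_apply (φ.symm v)] using hv w

end Iso

section Hyperbolic

variable (hT : G.IsTree) {φ : G ≃g G} (hfix : ∀ v, φ v ≠ v)
  (hinv : ∀ v w, G.Adj v w → ¬(φ v = w ∧ φ w = v))
include hT hfix hinv

theorem IsTree.between_apply_apply {v : V} (hv : v ∈ φ.minSet) :
    G.Between v (φ v) (φ (φ v)) := by
  have hG := hT.connected
  obtain ⟨a, hva, hBa⟩ := exists_adj_between hG (hfix v).symm
  obtain ⟨b, hvb, hBb⟩ := exists_adj_between hG (hfix v)
  have hφva : G.Adj (φ v) (φ a) := φ.map_adj_iff.2 hva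
  by_cases hb : b = φ a
  · exfalso
    have := dist_eq_one_iff_adj.2 hva
    have := dist_eq_one_iff_adj.2 hvb
    have := G.dist_comm (u := v) (v := φ v)
    by_cases ha : a = φ v
    · unfold Between at hBa hBb
      subst ha
      refine hinv v (φ v) hva ⟨rfl, ?_⟩
      rw [← hb]
      exact (hG.dist_eq_zero_iff.1 (by omega : G.dist b v = 0))
    · obtain ⟨c, hvc, hBc⟩ := exists_adj_between hG (Ne.symm ha)
      have hBc' := hBa.symm.trans_left hG hBc
      have := dist_eq_one_iff_adj.2 hvc
      unfold Between at hBa hBb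
      have hcb : c = b := hT.eq_of_adj_of_dist_lt (x := v) hvc hvb
        (by rw [G.dist_comm, G.dist_comm (u := v)]; unfold Between at hBc'; omega)
        (by rw [G.dist_comm, G.dist_comm (u := v)]; omega)
      have := hv a
      rw [← hb, ← hcb] at this
      have := G.dist_comm (u := a) (v := c)
      have := G.dist_comm (u := a) (v := φ v)
      unfold Between at hBc
      omega
  · have hvφva : G.Between v (φ v) (φ a) :=
      (hT.between_trans_of_ne hBb.symm (hT.between_of_adj_of_adj hvb hφva hb)
        hvb.ne.symm).trans_right hG (hT.between_of_adj_of_adj hvb hφva hb)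
    exact hT.between_trans_of_ne hvφva (hBa.map φ) hφva.ne

theorem IsTree.mem_minSet_of_between {v w : V} (hv : v ∈ φ.minSet)
    (hw : G.Between v w (φ v)) : w ∈ φ.minSet := by
  have hG := hT.connected
  have h := (hT.between_apply_apply hfix hinv hv).trans_left_right hG hw
  have hwφw := h.trans_right_left hG (hw.map φ)
  intro u
  have := hv u
  have := φ.dist_apply v w
  unfold Between at hw hwφw
  omega

theorem IsTree.exists_isOutwardEdge {p : V} (hp : p ∈ φ.minSet) :
    ∃ a, G.IsOutwardEdge φ.minSet p p a ∧ G.IsOutwardEdge φ.minSet p (φ a) (φ p) ∧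
      Disjoint (G.halfTree p a) (G.halfTree (φ a) (φ p)) := by
  have hG := hT.connected
  obtain ⟨a, hpa, hBa⟩ := exists_adj_between hG (x := p) (y := φ.symm p)
    (fun h => hfix p ((congrArg φ h).trans (φ.apply_symm_apply p)))
  obtain ⟨s, hps, hBs⟩ := exists_adj_between hG (hfix p).symm
  have hp' := Iso.symm_apply_mem_minSet hp
  have haxis : G.Between (φ.symm p) p (φ p) := by
    simpa using hT.between_apply_apply hfix hinv hp'
  have ha : a ∈ φ.minSet := hT.mem_minSet_of_between hfix hinv hp' (by simpa using hBa.symm)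
  have hs : s ∈ φ.minSet := hT.mem_minSet_of_between hfix hinv hp hBs
  have hφa : G.Between p (φ a) (φ p) := by simpa using hBa.symm.map φ
  refine ⟨a, ⟨hpa, between_self_left _ _, a, ha, hpa, between_self_right _ _⟩,
    ⟨φ.map_adj_iff.2 hpa.symm, hφa, s, hs, hps, hBs⟩, ?_⟩
  exact hT.disjoint_halfTree hpa (haxis.trans_left_right hG hBa.symm) hφa

end Hyperbolic

end SimpleGraph

/-- `FreeGroup.injective_lift_of_ping_pong` with the index type lifted to the universe of `H`. -/
theorem FreeGroup.injective_lift_of_ping_pong' {ι : Type} [Nontrivial ι] {H : Type u} [Group H]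
    (a : ι → H) {α : Type*} [MulAction H α] (X Y : ι → Set α)
    (hXnonempty : ∀ i, (X i).Nonempty) (hXdisj : Pairwise (Disjoint on X))
    (hYdisj : Pairwise (Disjoint on Y)) (hXYdisj : ∀ i j, Disjoint (X i) (Y j))
    (hX : ∀ i, a i • (Y i)ᶜ ⊆ X i) (hY : ∀ i, a⁻¹ i • (X i)ᶜ ⊆ Y i) :
    Function.Injective (FreeGroup.lift a) := by
  have hlift : FreeGroup.lift a = (FreeGroup.lift fun i : ULift.{u} ι => a i.down).comp
      (FreeGroup.freeGroupCongr Equiv.ulift.symm).toMonoidHom := by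
    ext
    simp
  rw [hlift, MonoidHom.coe_comp]
  refine Function.Injective.comp ?_ (MulEquiv.injective _)
  exact FreeGroup.injective_lift_of_ping_pong _ (X ∘ ULift.down) (Y ∘ ULift.down)
    (fun i => hXnonempty i.down) (fun i j hij => hXdisj (mt (ULift.ext i j) hij))
    (fun i j hij => hYdisj (mt (ULift.ext i j) hij)) (fun i j => hXYdisj i.down j.down)
    (fun i => hX i.down) (fun i => hY i.down)

open SimpleGraph

/-- If `g₁, g₂` are hyperbolic automorphisms of a tree whose axes
(the sets of vertices of minimal displacement) share no edge, and the subgroup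
`⟨g₁, g₂⟩` acts without edge inversions, then `⟨g₁, g₂⟩` is free of rank 2,
i.e. the natural map from the free group on two generators is injective. -/
theorem stmt_12 {V : Type*} (G : SimpleGraph V) (hT : G.IsTree)
    (g₁ g₂ : Equiv.Perm V)
    (hg₁ : ∀ v w, G.Adj (g₁ v) (g₁ w) ↔ G.Adj v w)
    (hg₂ : ∀ v w, G.Adj (g₂ v) (g₂ w) ↔ G.Adj v w)
    (hhyp₁ : ∀ v, g₁ v ≠ v) (hhyp₂ : ∀ v, g₂ v ≠ v)
    (hnoinv : ∀ h : Equiv.Perm V, h ∈ Subgroup.closure {g₁, g₂} →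
      ∀ v w, G.Adj v w → ¬(h v = w ∧ h w = v))
    (m₁ m₂ : ℕ)
    (hm₁ : m₁ = sInf (Set.range fun v => G.dist v (g₁ v)))
    (hm₂ : m₂ = sInf (Set.range fun v => G.dist v (g₂ v)))
    (hdisj : ¬ ∃ v w, G.Adj v w ∧
      G.dist v (g₁ v) = m₁ ∧ G.dist w (g₁ w) = m₁ ∧
      G.dist v (g₂ v) = m₂ ∧ G.dist w (g₂ w) = m₂) :
    Function.Injective
      (FreeGroup.lift (fun b : Bool => if b then g₁ else g₂) :
        FreeGroup Bool →* Equiv.Perm V) := by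
  have : Nonempty V := hT.connected.nonempty
  let φ₁ : G ≃g G := ⟨g₁, hg₁ _ _⟩
  let φ₂ : G ≃g G := ⟨g₂, hg₂ _ _⟩
  obtain ⟨p₁, hp₁, p₂, hp₂, hclose⟩ :=
    exists_mem_mem_forall_dist_le φ₁.minSet_nonempty φ₂.minSet_nonempty
  obtain ⟨a₁, hY₁, hX₁, hXY₁⟩ := hT.exists_isOutwardEdge hhyp₁
    (hnoinv g₁ (Subgroup.subset_closure (by simp))) hp₁
  obtain ⟨a₂, hY₂, hX₂, hXY₂⟩ := hT.exists_isOutwardEdge hhyp₂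
    (hnoinv g₂ (Subgroup.subset_closure (by simp))) hp₂
  subst hm₁ hm₂
  have cross := hT.disjoint_halfTree_of_isOutwardEdge hp₁ hp₂ hclose
    fun x y hxy hx₁ hy₁ hx₂ hy₂ => hdisj ⟨x, y, hxy, Iso.dist_eq_sInf_of_mem_minSet hx₁,
      Iso.dist_eq_sInf_of_mem_minSet hy₁, Iso.dist_eq_sInf_of_mem_minSet hx₂,
      Iso.dist_eq_sInf_of_mem_minSet hy₂⟩
  refine FreeGroup.injective_lift_of_ping_pong' _
    (fun i => if i then G.halfTree (φ₁ a₁) (φ₁ p₁) else G.halfTree (φ₂ a₂) (φ₂ p₂))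
    (fun i => if i then G.halfTree p₁ a₁ else G.halfTree p₂ a₂) ?_ ?_ ?_ ?_ ?_ ?_
  · rintro (_ | _)
    exacts [⟨_, hX₂.1.right_mem_halfTree⟩, ⟨_, hX₁.1.right_mem_halfTree⟩]
  · rintro (_ | _) (_ | _) h
    exacts [absurd rfl h, (cross hX₁ hX₂).symm, cross hX₁ hX₂, absurd rfl h]
  · rintro (_ | _) (_ | _) h
    exacts [absurd rfl h, (cross hY₁ hY₂).symm, cross hY₁ hY₂, absurd rfl h]
  · rintro (_ | _) (_ | _)
    exacts [hXY₂.symm, (cross hY₁ hX₂).symm, cross hX₁ hY₂, hXY₁.symm]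
  · rintro (_ | _)
    exacts [(hT.image_compl_halfTree φ₂ hY₂.1).le, (hT.image_compl_halfTree φ₁ hY₁.1).le]
  · rintro (_ | _)
    exacts [(hT.symm_image_compl_halfTree φ₂ hY₂.1.symm).le,
      (hT.symm_image_compl_halfTree φ₁ hY₁.1.symm).le]
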